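/- arXiv:2506.03612 — 2 statements merged into one kernel-verified Lean document; each statement's English description precedes it below -/
import Mathlib

section
/- Let G be a connected graph with nonadjacent vertices s,t, and let A ⊆ V(G) be such that G[{s}∪A] is connected and ({s}∪A) ∩ N_G[t] = ∅. Then N_G({s}∪A) contains exactly one minimal s,t-separator of G. -/
variable {V : Type*}

/-- Reachability in `G` by a walk avoiding the vertex set `S`. -/
def ReachAvoid (G : SimpleGraph V) (S : Set V) (u v : V) : Prop :=
  ∃ w : G.Walk u v, ∀ x ∈ w.support, x ∉ S

/-- The connected component of `G − S` containing `s`, as a subset of `V`. -/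
def compOf (G : SimpleGraph V) (S : Set V) (s : V) : Set V :=
  {v | ReachAvoid G S s v}

/-- `S` is an `s,t`-separator of `G`. -/
def IsSep (G : SimpleGraph V) (s t : V) (S : Set V) : Prop :=
  s ∉ S ∧ t ∉ S ∧ ¬ ReachAvoid G S s t

/-- `S` is a minimal `s,t`-separator of `G`. -/
def IsMinSep (G : SimpleGraph V) (s t : V) (S : Set V) : Prop :=
  IsSep G s t S ∧ ∀ S' ⊂ S, ¬ IsSep G s t S'

/-- The open neighborhood of a vertex set `X`. -/
def nbhd (G : SimpleGraph V) (X : Set V) : Set V :=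
  {v | v ∉ X ∧ ∃ x ∈ X, G.Adj x v}

/-- The closed neighborhood of a vertex `v`. -/
def clNbhd (G : SimpleGraph V) (v : V) : Set V :=
  insert v (G.neighborSet v)

/-- `S` is a minimal `s,t`-separator close to `sA`. -/
def CloseTo (G : SimpleGraph V) (s t : V) (A : Set V) (S : Set V) : Prop :=
  IsMinSep G s t S ∧ A ⊆ compOf G S s ∧
    ∀ T, IsMinSep G s t T → T ≠ S → A ⊆ compOf G T s →
      ¬ compOf G T s ⊆ compOf G S s

/-- `G` contains no asteroidal triple. -/
def IsATFree (G : SimpleGraph V) : Prop :=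
  ¬ ∃ a b c : V, a ≠ b ∧ a ≠ c ∧ b ≠ c ∧
    ¬ G.Adj a b ∧ ¬ G.Adj a c ∧ ¬ G.Adj b c ∧
    (∃ w : G.Walk a b, ∀ x ∈ w.support, x ∉ clNbhd G c) ∧
    (∃ w : G.Walk a c, ∀ x ∈ w.support, x ∉ clNbhd G b) ∧
    (∃ w : G.Walk b c, ∀ x ∈ w.support, x ∉ clNbhd G a)

/-- `S` is an `A,B`-separator. -/
def IsABSep (G : SimpleGraph V) (A B : Set V) (S : Set V) : Prop :=
  S ⊆ (A ∪ B)ᶜ ∧ ∀ a ∈ A, ∀ b ∈ B, ¬ ReachAvoid G S a b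

/-- `S` is a minimal `A,B`-separator. -/
def IsMinABSep (G : SimpleGraph V) (A B S : Set V) : Prop :=
  IsABSep G A B S ∧ ∀ S' ⊂ S, ¬ IsABSep G A B S'

/-- `S` is a safe (connectivity-preserving) `A,B`-separator: removing `S`
leaves two distinct components, one containing `A` and one containing `B`. -/
def IsSafeSep (G : SimpleGraph V) (A B S : Set V) : Prop :=
  S ⊆ (A ∪ B)ᶜ ∧ ∃ a b : V, a ∉ S ∧ b ∉ S ∧
    A ⊆ compOf G S a ∧ B ⊆ compOf G S b ∧
    Disjoint (compOf G S a) (compOf G S b)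

/-- The induced subgraph on `X` is connected (any two vertices of `X` are joined
by a walk staying in `X`). -/
def ConnIn (G : SimpleGraph V) (X : Set V) : Prop :=
  ∀ x ∈ X, ∀ y ∈ X, ∃ w : G.Walk x y, ∀ z ∈ w.support, z ∈ X

/-- The graph obtained from `G` by contracting `{s} ∪ A` to the vertex `s`
(the vertices of `A` become isolated). -/
def contractGraph (G : SimpleGraph V) (s : V) (A : Set V) : SimpleGraph V where
  Adj u v := u ∉ A ∧ v ∉ A ∧ u ≠ v ∧
    (G.Adj u v ∨ (u = s ∧ ∃ a ∈ A, G.Adj a v) ∨ (v = s ∧ ∃ a ∈ A, G.Adj a u))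
  symm := by
    constructor
    rintro u v ⟨hu, hv, hne, h⟩
    refine ⟨hv, hu, hne.symm, ?_⟩
    rcases h with h | h | h
    · exact Or.inl h.symm
    · exact Or.inr (Or.inr h)
    · exact Or.inr (Or.inl h)
  loopless := by
    constructor
    rintro u ⟨_, _, hne, _⟩
    exact hne rfl

/-- The graph obtained from `G` by adding all edges from `s` to `N_G[A]`. -/
def addApex (G : SimpleGraph V) (s : V) (A : Set V) : SimpleGraph V where
  Adj u v := G.Adj u v ∨
    (u = s ∧ v ≠ s ∧ v ∈ A ∪ nbhd G A) ∨
    (v = s ∧ u ≠ s ∧ u ∈ A ∪ nbhd G A)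
  symm := by
    constructor
    rintro u v (h | h | h)
    · exact Or.inl h.symm
    · exact Or.inr (Or.inr h)
    · exact Or.inr (Or.inl h)
  loopless := by
    constructor
    rintro u (h | ⟨h1, h2, _⟩ | ⟨h1, h2, _⟩)
    · exact G.loopless.irrefl u h
    · exact h2 h1
    · exact h2 h1

/-- The graph obtained from `G` by subdividing every edge. -/
def subdiv (G : SimpleGraph V) : SimpleGraph (V ⊕ G.edgeSet) where
  Adj x y :=
    match x, y with
    | Sum.inl u, Sum.inr e => u ∈ (e : Sym2 V)
    | Sum.inr e, Sum.inl u => u ∈ (e : Sym2 V)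
    | _, _ => False
  symm := by
    constructor
    rintro (u | e) (v | f) h <;> exact h
  loopless := by
    constructor
    rintro (u | e) h <;> exact h

/-- The instance `2Dis(G,A,B)` of 2-Disjoint-Connected-Subgraphs has a solution. -/
def TwoDisSolvable (G : SimpleGraph V) (A B : Set V) : Prop :=
  ∃ A₁ B₁ : Set V, Disjoint A₁ B₁ ∧ A ⊆ A₁ ∧ B ⊆ B₁ ∧
    ConnIn G A₁ ∧ ConnIn G B₁

/-! The separator is `N(D)`, where `D` is the component of `t` in `G − N(X)` and `X = {s} ∪ A`.
It separates `s` from `t` because every walk leaving `D` meets `N(D)`. Conversely, a separator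
`T ⊆ N(X)` that misses some `v ∈ N(D)` leaves the walk `s ⇝ x` (inside `X`), `x – v – d`, `d ⇝ t`
(inside `D`) intact, where `x ∈ X` and `d ∈ D` are neighbours of `v`. Hence `N(D)` is the least
`s,t`-separator inside `N(X)`, and so the only minimal one there. -/

namespace ReachAvoid

variable {G : SimpleGraph V} {S : Set V} {u v w : V}

theorem refl (hu : u ∉ S) : ReachAvoid G S u u :=
  ⟨.nil, by simpa using hu⟩

theorem trans (h₁ : ReachAvoid G S u v) (h₂ : ReachAvoid G S v w) : ReachAvoid G S u w := by
  obtain ⟨p, hp⟩ := h₁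
  obtain ⟨q, hq⟩ := h₂
  refine ⟨p.append q, fun x hx => ?_⟩
  rcases SimpleGraph.Walk.mem_support_append_iff p q |>.1 hx with h | h
  exacts [hp x h, hq x h]

theorem symm (h : ReachAvoid G S u v) : ReachAvoid G S v u := by
  obtain ⟨p, hp⟩ := h
  exact ⟨p.reverse, fun x hx => hp x (by simpa using hx)⟩

theorem mono {T : Set V} (hTS : T ⊆ S) (h : ReachAvoid G S u v) : ReachAvoid G T u v := by
  obtain ⟨p, hp⟩ := h
  exact ⟨p, fun x hx hxT => hp x hx (hTS hxT)⟩

theorem of_adj (h : G.Adj u v) (hu : u ∉ S) (hv : v ∉ S) : ReachAvoid G S u v :=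
  ⟨.cons h .nil, by simp [hu, hv]⟩

theorem right_notMem (h : ReachAvoid G S u v) : v ∉ S := by
  obtain ⟨p, hp⟩ := h
  exact hp v p.end_mem_support

theorem of_connIn {X : Set V} (hX : ConnIn G X) (hXS : Disjoint X S) (hu : u ∈ X)
    (hv : v ∈ X) : ReachAvoid G S u v := by
  obtain ⟨p, hp⟩ := hX u hu v hv
  exact ⟨p, fun x hx => hXS.notMem_of_mem_left (hp x hx)⟩

end ReachAvoid

variable {G : SimpleGraph V}

theorem not_reachAvoid_nbhd {X : Set V} {u v : V} (hu : u ∈ X) (hv : v ∉ X) :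
    ¬ ReachAvoid G (nbhd G X) u v := by
  rintro ⟨p, hp⟩
  induction p with
  | nil => exact hv hu
  | @cons a b c hab p ih =>
    by_cases hb : b ∈ X
    · exact ih hb hv fun x hx => hp x (by simp [hx])
    · exact hp b (by simp) ⟨hb, a, hu, hab⟩

theorem disjoint_nbhd (X : Set V) : Disjoint X (nbhd G X) :=
  Set.disjoint_left.2 fun _ hx hxN => hxN.1 hx

theorem nbhd_compOf_subset (S : Set V) (t : V) : nbhd G (compOf G S t) ⊆ S := by
  rintro v ⟨hvD, d, hd, hdv⟩
  by_contra hvS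
  exact hvD (hd.trans (.of_adj hdv hd.right_notMem hvS))

def closeSep (G : SimpleGraph V) (X : Set V) (t : V) : Set V :=
  nbhd G (compOf G (nbhd G X) t)

theorem closeSep_subset_nbhd (X : Set V) (t : V) : closeSep G X t ⊆ nbhd G X :=
  nbhd_compOf_subset _ t

theorem isSep_closeSep {X : Set V} {s t : V} (hs : s ∈ X) (htX : t ∉ X)
    (htN : t ∉ nbhd G X) : IsSep G s t (closeSep G X t) := by
  have hsS : s ∉ closeSep G X t := fun h =>
    (disjoint_nbhd X).notMem_of_mem_left hs (closeSep_subset_nbhd X t h)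
  have htD : t ∈ compOf G (nbhd G X) t := ReachAvoid.refl htN
  have hsD : s ∉ compOf G (nbhd G X) t := fun h => not_reachAvoid_nbhd hs htX h.symm
  exact ⟨hsS, fun h => htN (closeSep_subset_nbhd X t h),
    fun h => not_reachAvoid_nbhd htD hsD h.symm⟩

theorem closeSep_subset_of_isSep {X T : Set V} {s t : V} (hX : ConnIn G X) (hs : s ∈ X)
    (hTN : T ⊆ nbhd G X) (hT : IsSep G s t T) : closeSep G X t ⊆ T := by
  rintro v ⟨hvD, d, hd, hdv⟩
  obtain ⟨hvX, x, hx, hxv⟩ := nbhd_compOf_subset _ t ⟨hvD, d, hd, hdv⟩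
  by_contra hvT
  have hXT : Disjoint X T := (disjoint_nbhd X).mono_right hTN
  have hsx : ReachAvoid G T s x := .of_connIn hX hXT hs hx
  have hxv : ReachAvoid G T x v := .of_adj hxv (hXT.notMem_of_mem_left hx) hvT
  have hvd : ReachAvoid G T v d := .of_adj hdv.symm hvT fun h => hd.right_notMem (hTN h)
  have hdt : ReachAvoid G T d t := (hd.mono hTN).symm
  exact hT.2.2 (((hsx.trans hxv).trans hvd).trans hdt)

theorem IsSep.eq_of_subset_of_isMinSep {s t : V} {S T : Set V} (hS : IsSep G s t S)
    (hT : IsMinSep G s t T) (hST : S ⊆ T) : S = T := by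
  by_contra hne
  exact hT.2 S (hST.ssubset_of_ne hne) hS

theorem existsUnique_isMinSep_of_isLeast {s t : V} {N S : Set V} (hS : IsSep G s t S)
    (hSN : S ⊆ N) (hleast : ∀ T ⊆ N, IsSep G s t T → S ⊆ T) :
    ∃! S : Set V, IsMinSep G s t S ∧ S ⊆ N := by
  refine ⟨S, ⟨⟨hS, fun S' hS' hS'sep => ?_⟩, hSN⟩, fun T ⟨hT, hTN⟩ => ?_⟩
  · exact hS'.2 (hleast S' (hS'.1.trans hSN) hS'sep)
  · exact (hS.eq_of_subset_of_isMinSep hT (hleast T hTN hT.1)).symm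

theorem stmt3_general (G : SimpleGraph V) (s t : V) (A : Set V)
    (hconnA : ConnIn G (insert s A))
    (hAt : insert s A ∩ clNbhd G t = ∅) :
    ∃! S : Set V, IsMinSep G s t S ∧ S ⊆ nbhd G (insert s A) := by
  have hs : s ∈ insert s A := Set.mem_insert s A
  have hdisj : Disjoint (insert s A) (clNbhd G t) := Set.disjoint_iff_inter_eq_empty.2 hAt
  have htX : t ∉ insert s A := hdisj.notMem_of_mem_right (Set.mem_insert t _)
  have htN : t ∉ nbhd G (insert s A) := fun ⟨_, x, hx, hxt⟩ =>
    hdisj.notMem_of_mem_left hx (Set.mem_insert_of_mem t hxt.symm)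
  exact existsUnique_isMinSep_of_isLeast (isSep_closeSep hs htX htN)
    (closeSep_subset_nbhd _ t) fun _ hTN => closeSep_subset_of_isSep hconnA hs hTN

theorem stmt3 (G : SimpleGraph V) (hconn : G.Connected) (s t : V)
    (hst : s ≠ t) (hadj : ¬ G.Adj s t) (A : Set V)
    (hconnA : ConnIn G (insert s A))
    (hAt : insert s A ∩ clNbhd G t = ∅) :
    ∃! S : Set V, IsMinSep G s t S ∧ S ⊆ nbhd G (insert s A) :=
  stmt3_general G s t A hconnA hAt
end

section
/- Let G be a connected graph, s,t nonadjacent vertices, Q a minimal s,t-separator, M the graph obtained from G by contracting C_s(G−Q) to the vertex s, and D, A vertex sets with D = A ∖ C_s(G−Q). Assume that every minimal s,t-separator S of G with A ⊆ C_s(G−S) satisfies C_s(G−Q) ⊆ C_s(G−S). Then the minimal s,t-separators of M close to sD are exactly the minimal s,t-separators of G close to sA, i.e., F_{sD}(M) = F_{sA}(G). -/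
/-! Write `C = C_s(G−Q)`. In the contraction `M` the vertices of `C \ {s}` are isolated, so a
minimal separator of `M` avoids `C`; for separators `S` avoiding `C`, walks avoiding `S`
correspond between `G` and `M` by sending `C` to `s`. Hence the minimal separators of `M` are those
of `G` whose `s`-side contains `C`, with `C_s(M−S) = C_s(G−S) \ (C \ {s})`. The hypothesis says
that every separator competing for closeness to `sA` is of this kind, and on such separators
deleting `C` turns `A ⊆ C_s(G−S)` into `D ⊆ C_s(M−S)` and preserves inclusions of `s`-sides. -/

variable {V : Type*}

open Relation SimpleGraph

def AvoidAdj (G : SimpleGraph V) (S : Set V) (a b : V) : Prop :=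
  G.Adj a b ∧ a ∉ S ∧ b ∉ S

section Reach

variable {G : SimpleGraph V} {S : Set V} {s u v : V}

instance : Std.Symm (AvoidAdj G S) where
  symm _ _ h := ⟨h.1.symm, h.2.2, h.2.1⟩

lemma reflTransGen_avoidAdj_of_walk (w : G.Walk u v) (hw : ∀ x ∈ w.support, x ∉ S) :
    ReflTransGen (AvoidAdj G S) u v := by
  induction w with
  | nil => exact .refl
  | cons h p ih =>
    simp only [Walk.support_cons, List.mem_cons, forall_eq_or_imp] at hw
    exact .head ⟨h, hw.1, hw.2 _ p.start_mem_support⟩ (ih hw.2)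

lemma reachAvoid_iff : ReachAvoid G S u v ↔ u ∉ S ∧ ReflTransGen (AvoidAdj G S) u v := by
  refine ⟨fun ⟨w, hw⟩ => ⟨hw u w.start_mem_support, reflTransGen_avoidAdj_of_walk w hw⟩, ?_⟩
  rintro ⟨hu, h⟩
  induction h with
  | refl => exact ⟨.nil, by simpa using hu⟩
  | tail _ hbc ih =>
    obtain ⟨w, hw⟩ := ih
    refine ⟨w.concat hbc.1, fun x hx => ?_⟩
    rw [Walk.support_concat, List.mem_append, List.mem_singleton] at hx
    rcases hx with hx | rfl
    exacts [hw x hx, hbc.2.2]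

lemma ReachAvoid.right_notMem_s19 (h : ReachAvoid G S u v) : v ∉ S :=
  h.elim fun w hw => hw v w.end_mem_support

lemma self_mem_compOf (hs : s ∉ S) : s ∈ compOf G S s :=
  reachAvoid_iff.2 ⟨hs, .refl⟩

lemma compOf_subset_compOf_of_disjoint {Q : Set V} (h : Disjoint (compOf G Q s) S) :
    compOf G Q s ⊆ compOf G S s := by
  intro x hx
  obtain ⟨hsQ, hsx⟩ := reachAvoid_iff.1 hx
  have hsS : s ∉ S := Set.disjoint_left.1 h (self_mem_compOf hsQ)
  refine reachAvoid_iff.2 ⟨hsS, ?_⟩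
  induction hsx with
  | refl => exact .refl
  | @tail b c hsb hbc ih =>
    have hc : c ∈ compOf G Q s := reachAvoid_iff.2 ⟨hsQ, hsb.tail hbc⟩
    have hb : b ∈ compOf G Q s := reachAvoid_iff.2 ⟨hsQ, hsb⟩
    exact (ih hb).tail ⟨hbc.1, Set.disjoint_left.1 h hb, Set.disjoint_left.1 h hc⟩

end Reach

section Contract

variable {G : SimpleGraph V} {S K : Set V} {s t u v : V}

lemma reachAvoid_contractGraph (hsK : s ∉ K) (hsS : s ∉ S) (hu : u ∉ K) (hv : v ∉ K)
    (h : ReachAvoid G S u v) : ReachAvoid (contractGraph G s K) S u v := by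
  classical
  let π : V → V := fun x => if x ∈ K then s else x
  have hπ : ∀ {x}, x ∉ K → π x = x := fun hx => if_neg hx
  have hstep_of_mem : ∀ a b, AvoidAdj G S a b → a ∈ K →
      ReflTransGen (AvoidAdj (contractGraph G s K) S) (π a) (π b) := by
    intro a b hab ha
    rw [show π a = s from if_pos ha]
    by_cases hb : b ∈ K
    · rw [show π b = s from if_pos hb]
    rw [hπ hb]
    obtain rfl | hbs := eq_or_ne b s
    · exact .refl
    exact .single ⟨⟨hsK, hb, hbs.symm, .inr (.inl ⟨rfl, a, ha, hab.1⟩)⟩, hsS, hab.2.2⟩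
  have hstep : ∀ a b, AvoidAdj G S a b →
      ReflTransGen (AvoidAdj (contractGraph G s K) S) (π a) (π b) := by
    intro a b hab
    by_cases ha : a ∈ K
    · exact hstep_of_mem a b hab ha
    by_cases hb : b ∈ K
    · exact symm (hstep_of_mem b a (symm hab) hb)
    rw [hπ ha, hπ hb]
    exact .single ⟨⟨ha, hb, hab.1.ne, .inl hab.1⟩, hab.2⟩
  obtain ⟨huS, huv⟩ := reachAvoid_iff.1 h
  have := ReflTransGen.lift' π hstep _ _ huv
  rw [Function.onFun_apply, hπ hu, hπ hv] at this
  exact reachAvoid_iff.2 ⟨huS, this⟩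

lemma reachAvoid_of_reachAvoid_contractGraph (hK : K ⊆ compOf G S s)
    (h : ReachAvoid (contractGraph G s K) S u v) : ReachAvoid G S u v := by
  have hvia : ∀ {a b}, a ∈ K → G.Adj a b → b ∉ S → ReflTransGen (AvoidAdj G S) s b :=
    fun ha hab hb => (reachAvoid_iff.1 (hK ha)).2.tail ⟨hab, (hK ha).right_notMem_s19, hb⟩
  have hstep : ∀ a b, AvoidAdj (contractGraph G s K) S a b → ReflTransGen (AvoidAdj G S) a b := by
    rintro a b ⟨⟨-, -, -, hab | ⟨rfl, k, hk, hkb⟩ | ⟨rfl, k, hk, hka⟩⟩, haS, hbS⟩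
    · exact .single ⟨hab, haS, hbS⟩
    · exact hvia hk hkb hbS
    · exact symm (hvia hk hka haS)
  obtain ⟨huS, huv⟩ := reachAvoid_iff.1 h
  exact reachAvoid_iff.2 ⟨huS, ReflTransGen.lift' id hstep _ _ huv⟩

lemma eq_of_reachAvoid_contractGraph (hv : v ∈ K)
    (h : ReachAvoid (contractGraph G s K) S u v) : u = v := by
  rcases (reachAvoid_iff.1 h).2.cases_tail with rfl | ⟨_, -, hstep⟩
  · rfl
  · exact absurd hv hstep.1.2.1

lemma compOf_contractGraph (hsK : s ∉ K) (hsS : s ∉ S) (hK : K ⊆ compOf G S s) :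
    compOf (contractGraph G s K) S s = compOf G S s \ K := by
  ext x
  refine ⟨fun hx => ⟨reachAvoid_of_reachAvoid_contractGraph hK hx, fun hxK => ?_⟩,
    fun hx => reachAvoid_contractGraph hsK hsS hsK hx.2 hx.1⟩
  exact hsK (eq_of_reachAvoid_contractGraph hxK hx ▸ hxK)

lemma IsSep.of_contractGraph (hsK : s ∉ K) (htK : t ∉ K)
    (hS : IsSep (contractGraph G s K) s t S) : IsSep G s t S :=
  ⟨hS.1, hS.2.1, fun h => hS.2.2 (reachAvoid_contractGraph hsK hS.1 hsK htK h)⟩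

lemma IsSep.contractGraph (hK : K ⊆ compOf G S s) (hS : IsSep G s t S) :
    IsSep (contractGraph G s K) s t S :=
  ⟨hS.1, hS.2.1, fun h => hS.2.2 (reachAvoid_of_reachAvoid_contractGraph hK h)⟩

/-- Contracted vertices are isolated, so a minimal separator has no use for them. -/
lemma IsMinSep.disjoint_of_contractGraph (hS : IsMinSep (contractGraph G s K) s t S) :
    Disjoint S K := by
  refine Set.disjoint_left.2 fun x hxS hxK => hS.2 (S \ {x}) (Set.sdiff_singleton_ssubset.2 hxS)
    ⟨fun h => hS.1.1 h.1, fun h => hS.1.2.1 h.1, fun h => hS.1.2.2 ?_⟩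
  obtain ⟨hs, hst⟩ := reachAvoid_iff.1 h
  refine reachAvoid_iff.2 ⟨hS.1.1, ReflTransGen.mono (fun a b hab => ⟨hab.1, ?_, ?_⟩) _ _ hst⟩
  · exact fun ha => hab.2.1 ⟨ha, fun hax => hab.1.1 (hax ▸ hxK)⟩
  · exact fun hb => hab.2.2 ⟨hb, fun hbx => hab.1.2.1 (hbx ▸ hxK)⟩

end Contract

section ContractComponent

variable {G : SimpleGraph V} {Q S : Set V} {s t : V}

lemma compOf_subset_of_disjoint_diff (hsS : s ∉ S) (h : Disjoint S (compOf G Q s \ {s})) :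
    compOf G Q s ⊆ compOf G S s := by
  refine compOf_subset_compOf_of_disjoint (Set.disjoint_left.2 fun x hxQ hxS => ?_)
  exact Set.disjoint_left.1 h hxS ⟨hxQ, fun hxs => hsS (hxs ▸ hxS)⟩

lemma isMinSep_contractGraph_iff (hQ : IsSep G s t Q) :
    IsMinSep (contractGraph G s (compOf G Q s \ {s})) s t S ↔
      IsMinSep G s t S ∧ compOf G Q s ⊆ compOf G S s := by
  have hsK : s ∉ compOf G Q s \ {s} := fun h => h.2 rfl
  have htK : t ∉ compOf G Q s \ {s} := fun h => hQ.2.2 h.1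
  constructor
  · intro hS
    refine ⟨⟨hS.1.of_contractGraph hsK htK, fun S' hS'S hS' => hS.2 S' hS'S ?_⟩,
      compOf_subset_of_disjoint_diff hS.1.1 hS.disjoint_of_contractGraph⟩
    have hdisj := hS.disjoint_of_contractGraph.mono_left hS'S.1
    exact hS'.contractGraph (Set.sdiff_subset.trans (compOf_subset_of_disjoint_diff hS'.1 hdisj))
  · rintro ⟨hS, hQS⟩
    exact ⟨hS.1.contractGraph (Set.sdiff_subset.trans hQS),
      fun S' hS'S hS' => hS.2 S' hS'S (hS'.of_contractGraph hsK htK)⟩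

lemma compOf_contractGraph_compOf (hQ : IsSep G s t Q) (hQS : compOf G Q s ⊆ compOf G S s) :
    compOf (contractGraph G s (compOf G Q s \ {s})) S s = compOf G S s \ (compOf G Q s \ {s}) :=
  compOf_contractGraph (fun h => h.2 rfl) (hQS (self_mem_compOf hQ.1)).right_notMem_s19
    (Set.sdiff_subset.trans hQS)

end ContractComponent

lemma diff_subset_diff_iff_of_subset {α : Type*} {A C K Y : Set α} (hKC : K ⊆ C) (hCY : C ⊆ Y) :
    A \ C ⊆ Y \ K ↔ A ⊆ Y := by
  refine ⟨fun h x hx => ?_, fun h x hx => ⟨h hx.1, fun hxK => hx.2 (hKC hxK)⟩⟩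
  by_cases hxC : x ∈ C
  exacts [hCY hxC, (h ⟨hx, hxC⟩).1]


lemma closeTo_iff_closeTo {G M : SimpleGraph V} {s t : V} {A D S : Set V}
    (hcand : ∀ T, IsMinSep M s t T ∧ D ⊆ compOf M T s ↔ IsMinSep G s t T ∧ A ⊆ compOf G T s)
    (hord : ∀ T, IsMinSep G s t T → A ⊆ compOf G T s → IsMinSep G s t S → A ⊆ compOf G S s →
      (compOf M T s ⊆ compOf M S s ↔ compOf G T s ⊆ compOf G S s)) :
    CloseTo M s t D S ↔ CloseTo G s t A S := by
  constructor
  · rintro ⟨hSM, hDS, hclose⟩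
    obtain ⟨hS, hAS⟩ := (hcand S).1 ⟨hSM, hDS⟩
    refine ⟨hS, hAS, fun T hT hne hAT hTS => ?_⟩
    obtain ⟨hTM, hDT⟩ := (hcand T).2 ⟨hT, hAT⟩
    exact hclose T hTM hne hDT ((hord T hT hAT hS hAS).2 hTS)
  · rintro ⟨hS, hAS, hclose⟩
    obtain ⟨hSM, hDS⟩ := (hcand S).2 ⟨hS, hAS⟩
    refine ⟨hSM, hDS, fun T hTM hne hDT hTS => ?_⟩
    obtain ⟨hT, hAT⟩ := (hcand T).1 ⟨hTM, hDT⟩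
    exact hclose T hT hne hAT ((hord T hT hAT hS hAS).1 hTS)

theorem stmt19_general (G : SimpleGraph V) (s t : V)
    (Q : Set V) (hQ : IsMinSep G s t Q)
    (A D : Set V) (hD : D = A \ compOf G Q s)
    (hyp : ∀ S : Set V, IsMinSep G s t S → A ⊆ compOf G S s →
      compOf G Q s ⊆ compOf G S s) :
    {S : Set V | CloseTo (contractGraph G s (compOf G Q s \ {s})) s t D S} =
      {S : Set V | CloseTo G s t A S} := by
  subst hD
  have hD : ∀ {T}, compOf G Q s ⊆ compOf G T s →
      (A \ compOf G Q s ⊆ compOf (contractGraph G s (compOf G Q s \ {s})) T s ↔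
        A ⊆ compOf G T s) := fun hQT => by
    rw [compOf_contractGraph_compOf hQ.1 hQT, diff_subset_diff_iff_of_subset Set.sdiff_subset hQT]
  refine Set.ext fun S => closeTo_iff_closeTo (fun T => ?_) (fun T hT hAT hS hAS => ?_)
  · rw [isMinSep_contractGraph_iff hQ.1]
    exact ⟨fun ⟨⟨hT, hQT⟩, hDT⟩ => ⟨hT, (hD hQT).1 hDT⟩,
      fun ⟨hT, hAT⟩ => ⟨⟨hT, hyp T hT hAT⟩, (hD (hyp T hT hAT)).2 hAT⟩⟩
  · have hQS := hyp S hS hAS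
    rw [compOf_contractGraph_compOf hQ.1 (hyp T hT hAT), compOf_contractGraph_compOf hQ.1 hQS]
    exact diff_subset_diff_iff_of_subset subset_rfl (Set.sdiff_subset.trans hQS)

theorem stmt19 (G : SimpleGraph V) (hconn : G.Connected) (s t : V)
    (hst : s ≠ t) (hadj : ¬ G.Adj s t)
    (Q : Set V) (hQ : IsMinSep G s t Q)
    (A D : Set V) (hD : D = A \ compOf G Q s)
    (hyp : ∀ S : Set V, IsMinSep G s t S → A ⊆ compOf G S s →
      compOf G Q s ⊆ compOf G S s) :
    {S : Set V | CloseTo (contractGraph G s (compOf G Q s \ {s})) s t D S} =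
      {S : Set V | CloseTo G s t A S} :=
  stmt19_general G s t Q hQ A D hD hyp
end
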